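/- arXiv:2604.17765 — 2 statements merged into one kernel-verified Lean document; each statement's English description precedes it below -/
import Mathlib

section
/- Under the standing hypotheses, if τ is a state on M that is h-independent over R, then 2 ≤ S(τ, M_1, …, M_m) ≤ 2√2, where S(τ, M_1, …, M_m) denotes the supremum of |I_τ|^{1/h} + |J_τ|^{1/h} over all choices of self-adjoint contractions A_{i,0}, A_{i,1} ∈ M_i (i = 1,…,m). -/
open scoped ComplexOrder

/-- Product of `f` over a finite set of indices, taken in increasing index order.
(In our applications the factors mutually commute, so the order is immaterial.) -/
noncomputable def ordProd {M : Type*} [Monoid M] {m : ℕ}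
    (s : Finset (Fin m)) (f : Fin m → M) : M :=
  ((s.sort (· ≤ ·)).map f).prod

/-- The Bell-type quantity `S(τ, M₁, …, M_m)`: the supremum of
`|I_τ|^{1/h} + |J_τ|^{1/h}` over all choices of self-adjoint contractions
`A_{i,0}, A_{i,1} ∈ M_i`. -/
noncomputable def bellSup {M : Type*} [NormedRing M] [StarRing M] [CStarRing M]
    [CompleteSpace M] [NormedAlgebra ℂ M] [StarModule ℂ M]
    [PartialOrder M] [StarOrderedRing M] {m : ℕ}
    (Msub : Fin m → StarSubalgebra ℂ M) (R : Finset (Fin m)) (h : ℕ)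
    (τ : M →ₗ[ℂ] ℂ) : ℝ :=
  sSup { s : ℝ | ∃ A0 A1 : Fin m → M,
    (∀ i, A0 i ∈ Msub i) ∧ (∀ i, A1 i ∈ Msub i) ∧
    (∀ i, IsSelfAdjoint (A0 i)) ∧ (∀ i, IsSelfAdjoint (A1 i)) ∧
    (∀ i, -1 ≤ A0 i ∧ A0 i ≤ 1) ∧ (∀ i, -1 ≤ A1 i ∧ A1 i ≤ 1) ∧
    s = ‖τ (ordProd R (fun i => A0 i + A1 i) * ordProd Rᶜ A0)‖ ^ (1 / (h : ℝ)) +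
        ‖τ (ordProd R (fun i => A0 i - A1 i) * ordProd Rᶜ A1)‖ ^ (1 / (h : ℝ)) }

/-!
Put `u i = A₀ i + A₁ i` and `v i = A₀ i - A₁ i`. The product `P = ∏_{i ∈ R} u i` is self-adjoint
(its factors commute) and the product over the parties outside `R` is a contraction, so the
Cauchy–Schwarz inequality for `τ` followed by `h`-independence gives
`|I_τ|² ≤ τ(P²) = ∏_{i ∈ R} τ(u i ²)`, and likewise `|J_τ|² ≤ ∏_{i ∈ R} τ(v i ²)`.
By AM–GM, `|I_τ|^{1/h} + |J_τ|^{1/h}` is at most the mean over `i ∈ R` of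
`√τ(u i ²) + √τ(v i ²) ≤ √(2 τ(u i ² + v i ²)) = √(4 τ(A₀ i ² + A₁ i ²)) ≤ 2√2`.
The value `2` is attained at `A₀ = A₁ = 1`.
-/

section OrdProd

variable {M : Type*} {m : ℕ}

lemma ordProd_eq_noncommProd [Monoid M] (s : Finset (Fin m)) (f : Fin m → M)
    (hf : (s : Set (Fin m)).Pairwise fun i j => Commute (f i) (f j)) :
    ordProd s f = s.noncommProd f hf := by
  have hl : (((s.sort (· ≤ ·)).map f : List M) : Multiset M) = s.val.map f := by
    rw [← Multiset.map_coe, Finset.sort_eq]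
  rw [ordProd, ← Multiset.noncommProd_coe _ (hl ▸ Finset.noncommProd_lemma s f hf)]
  unfold Finset.noncommProd
  congr 1

lemma ordProd_eq_prod [CommMonoid M] (s : Finset (Fin m)) (f : Fin m → M) :
    ordProd s f = ∏ i ∈ s, f i := by
  rw [ordProd, ← Multiset.prod_coe, ← Multiset.map_coe, Finset.sort_eq,
    Finset.prod_eq_multiset_prod]

lemma ordProd_mul_ordProd [Monoid M] {s : Finset (Fin m)} {f g : Fin m → M}
    (hf : (s : Set (Fin m)).Pairwise fun i j => Commute (f i) (f j))
    (hg : (s : Set (Fin m)).Pairwise fun i j => Commute (g i) (g j))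
    (hgf : (s : Set (Fin m)).Pairwise fun i j => Commute (g i) (f j)) :
    ordProd s f * ordProd s g = ordProd s fun i => f i * g i := by
  rw [ordProd_eq_noncommProd s f hf, ordProd_eq_noncommProd s g hg,
    ← Finset.noncommProd_mul_distrib f g hf hg hgf, ordProd_eq_noncommProd]
  rfl

lemma isSelfAdjoint_ordProd [Monoid M] [StarMul M] {s : Finset (Fin m)} {f : Fin m → M}
    (hsa : ∀ i ∈ s, IsSelfAdjoint (f i))
    (hf : (s : Set (Fin m)).Pairwise fun i j => Commute (f i) (f j)) :
    IsSelfAdjoint (ordProd s f) := by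
  rw [ordProd_eq_noncommProd s f hf]
  induction s using Finset.induction_on with
  | empty => simp
  | insert a s ha ih =>
    rw [Finset.noncommProd_insert_of_notMem _ _ _ _ ha]
    have hs := ih (fun i hi => hsa i (Finset.mem_insert_of_mem hi)) (hf.mono (by simp))
    refine ((hsa a (s.mem_insert_self a)).commute_iff hs).mp ?_
    exact Finset.noncommProd_commute _ _ _ _ fun i hi =>
      hf (by simp) (by simp [hi]) (by rintro rfl; exact ha hi)

lemma ordProd_const [Monoid M] (s : Finset (Fin m)) (a : M) :
    ordProd s (fun _ => a) = a ^ s.card := by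
  simp [ordProd, List.map_const', List.prod_replicate]

lemma norm_ordProd_le [NormedRing M] [NormOneClass M] (s : Finset (Fin m)) (f : Fin m → M) :
    ‖ordProd s f‖ ≤ ∏ i ∈ s, ‖f i‖ := by
  rw [← ordProd_eq_prod s (‖f ·‖)]
  exact (List.norm_prod_le _).trans_eq (by simp [ordProd, List.map_map, Function.comp_def])

end OrdProd

noncomputable def bellValue {M : Type*} [Ring M] [Module ℂ M] {m : ℕ} (τ : M →ₗ[ℂ] ℂ)
    (R : Finset (Fin m)) (h : ℕ) (A0 A1 : Fin m → M) : ℝ :=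
  ‖τ (ordProd R (fun i => A0 i + A1 i) * ordProd Rᶜ A0)‖ ^ (1 / (h : ℝ)) +
    ‖τ (ordProd R (fun i => A0 i - A1 i) * ordProd Rᶜ A1)‖ ^ (1 / (h : ℝ))

lemma bellValue_one_one {M : Type*} [Ring M] [Algebra ℂ M] {m : ℕ} {τ : M →ₗ[ℂ] ℂ}
    (hτ1 : τ 1 = 1) {R : Finset (Fin m)} (hR : R.Nonempty) :
    bellValue τ R R.card (fun _ => 1) (fun _ => 1) = 2 := by
  have hn : (R.card : ℝ) ≠ 0 := by exact_mod_cast hR.card_pos.ne'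
  have hτ2 : τ ((2 : M) ^ R.card) = 2 ^ R.card := by
    rw [show (2 : M) ^ R.card = algebraMap ℂ M (2 ^ R.card) by rw [map_pow, map_ofNat],
      Algebra.algebraMap_eq_smul_one, map_smul, hτ1, smul_eq_mul, mul_one]
  simp only [bellValue, one_add_one_eq_two, sub_self, ordProd_const, one_pow, mul_one,
    zero_pow hR.card_pos.ne', map_zero, norm_zero, hτ2, norm_pow, Complex.norm_two,
    Real.zero_rpow (one_div_ne_zero hn), add_zero]
  rw [← Real.rpow_natCast, ← Real.rpow_mul zero_le_two, mul_one_div_cancel hn, Real.rpow_one]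

lemma sqrt_add_sqrt_le_two_mul_sqrt_two {a b : ℝ} (ha : 0 ≤ a) (hb : 0 ≤ b) (hab : a + b ≤ 4) :
    √a + √b ≤ 2 * √2 := by
  calc √a + √b ≤ √8 := Real.le_sqrt_of_sq_le (by
        nlinarith [sq_nonneg (√a - √b), Real.sq_sqrt ha, Real.sq_sqrt hb])
    _ = 2 * √2 := by
        rw [show (8 : ℝ) = 2 ^ 2 * 2 by norm_num, Real.sqrt_mul' _ zero_le_two,
          Real.sqrt_sq zero_le_two]

lemma rpow_one_div_card_le_mean_sqrt {ι : Type*} {s : Finset ι} (hs : s.Nonempty) {a : ι → ℝ}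
    (ha : ∀ i ∈ s, 0 ≤ a i) {x : ℝ} (hx : 0 ≤ x) (hxa : x ^ 2 ≤ ∏ i ∈ s, a i) :
    x ^ (1 / (s.card : ℝ)) ≤ (∑ i ∈ s, √(a i)) / s.card := by
  have hx' : x ≤ ∏ i ∈ s, √(a i) := by
    rw [← Real.sqrt_prod s ha]
    exact Real.le_sqrt_of_sq_le hxa
  calc x ^ (1 / (s.card : ℝ)) ≤ (∏ i ∈ s, √(a i)) ^ (1 / (s.card : ℝ)) :=
        Real.rpow_le_rpow hx hx' (by positivity)
    _ ≤ (∑ i ∈ s, √(a i)) / s.card := by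
        simpa using Real.geom_mean_le_arith_mean s (fun _ => 1) (fun i => √(a i)) (by simp)
          (by simpa using hs) (fun i _ => Real.sqrt_nonneg _)

lemma rpow_add_rpow_le_two_mul_sqrt_two {ι : Type*} {s : Finset ι} (hs : s.Nonempty)
    {a b : ι → ℝ} (ha : ∀ i ∈ s, 0 ≤ a i) (hb : ∀ i ∈ s, 0 ≤ b i)
    (hab : ∀ i ∈ s, a i + b i ≤ 4) {x y : ℝ} (hx : 0 ≤ x) (hy : 0 ≤ y)
    (hxa : x ^ 2 ≤ ∏ i ∈ s, a i) (hyb : y ^ 2 ≤ ∏ i ∈ s, b i) :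
    x ^ (1 / (s.card : ℝ)) + y ^ (1 / (s.card : ℝ)) ≤ 2 * √2 := by
  have hn : (0 : ℝ) < s.card := by exact_mod_cast hs.card_pos
  calc x ^ (1 / (s.card : ℝ)) + y ^ (1 / (s.card : ℝ))
      ≤ (∑ i ∈ s, √(a i)) / s.card + (∑ i ∈ s, √(b i)) / s.card :=
        add_le_add (rpow_one_div_card_le_mean_sqrt hs ha hx hxa)
          (rpow_one_div_card_le_mean_sqrt hs hb hy hyb)
    _ = (∑ i ∈ s, (√(a i) + √(b i))) / s.card := by rw [Finset.sum_add_distrib, add_div]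
    _ ≤ (∑ _i ∈ s, 2 * √2) / s.card := by
        gcongr with i hi
        exact sqrt_add_sqrt_le_two_mul_sqrt_two (ha i hi) (hb i hi) (hab i hi)
    _ = 2 * √2 := by rw [Finset.sum_const, nsmul_eq_mul]; field_simp

lemma add_mul_self_add_sub_mul_self_le_four {R : Type*} [Ring R] [PartialOrder R]
    [IsOrderedAddMonoid R] {x y : R} (hx : x * x ≤ 1) (hy : y * y ≤ 1) :
    (x + y) * (x + y) + (x - y) * (x - y) ≤ 4 :=
  calc (x + y) * (x + y) + (x - y) * (x - y) = (x * x + x * x) + (y * y + y * y) := by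
        noncomm_ring
    _ ≤ (1 + 1) + (1 + 1) := add_le_add (add_le_add hx hx) (add_le_add hy hy)
    _ = 4 := by norm_num

namespace PositiveLinearMap

open scoped InnerProductSpace

lemma norm_apply_star_mul_sq_le {A : Type*} [NonUnitalCStarAlgebra A] [PartialOrder A]
    [StarOrderedRing A] (f : A →ₚ[ℂ] ℂ) (a b : A) :
    ‖f (star a * b)‖ ^ 2 ≤ (f (star a * a)).re * (f (star b * b)).re := by
  have hnorm (x : A) : ‖f.toPreGNS x‖ ^ 2 = (f (star x * x)).re :=
    norm_sq_eq_re_inner (𝕜 := ℂ) _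
  calc ‖f (star a * b)‖ ^ 2 = ‖⟪f.toPreGNS a, f.toPreGNS b⟫_ℂ‖ ^ 2 := rfl
    _ ≤ (‖f.toPreGNS a‖ * ‖f.toPreGNS b‖) ^ 2 := by gcongr; exact norm_inner_le_norm _ _
    _ = (f (star a * a)).re * (f (star b * b)).re := by rw [mul_pow, hnorm, hnorm]

variable {A : Type*} [CStarAlgebra A] [PartialOrder A] [StarOrderedRing A] (f : A →ₚ[ℂ] ℂ)

lemma apply_mul_self_eq_re {a : A} (ha : IsSelfAdjoint a) : f (a * a) = (f (a * a)).re :=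
  Complex.eq_re_of_ofReal_le (r := 0) (by
    rw [Complex.ofReal_zero]; exact f.map_nonneg ha.mul_self_nonneg)

lemma re_apply_star_mul_self_le (a : A) : (f (star a * a)).re ≤ ‖a‖ ^ 2 * (f 1).re := by
  have h := OrderHomClass.mono f (CStarAlgebra.star_mul_le_algebraMap_norm_sq (a := a))
  rw [Algebra.algebraMap_eq_smul_one, f.map_smul_of_tower] at h
  simpa [← Complex.ofReal_pow] using (Complex.le_def.mp h).1

end PositiveLinearMap

section CStarAlgebra

variable {A : Type*} [CStarAlgebra A] [PartialOrder A] [StarOrderedRing A]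

lemma IsSelfAdjoint.norm_le_one {a : A} (ha : IsSelfAdjoint a) (h1 : -1 ≤ a) (h2 : a ≤ 1) :
    ‖a‖ ≤ 1 := by
  nontriviality A
  have hle : ∀ x ∈ spectrum ℝ a, x ≤ 1 :=
    (le_algebraMap_iff_spectrum_le ha).mp (by simpa using h2)
  have hge : ∀ x ∈ spectrum ℝ a, -1 ≤ x :=
    (algebraMap_le_iff_le_spectrum ha).mp (by simpa using h1)
  rcases CStarAlgebra.norm_or_neg_norm_mem_spectrum ha with h | h
  · exact hle _ h
  · linarith [hge _ h]

lemma star_mul_self_le_one_of_norm_le_one {a : A} (h : ‖a‖ ≤ 1) : star a * a ≤ 1 :=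
  (CStarAlgebra.norm_le_one_iff_of_nonneg _ (star_mul_self_nonneg a)).mp <| by
    rw [CStarRing.norm_star_mul_self]
    exact mul_le_one₀ h (norm_nonneg a) h

variable {m : ℕ} [Nontrivial A] {f : A →ₚ[ℂ] ℂ}

lemma PositiveLinearMap.norm_apply_ordProd_mul_sq_le (hf1 : f 1 = 1) {s t : Finset (Fin m)}
    {u B : Fin m → A} (hu : ∀ i ∈ s, IsSelfAdjoint (u i))
    (hcomm : (s : Set (Fin m)).Pairwise fun i j => Commute (u i) (u j))
    (hB : ∀ i ∈ t, ‖B i‖ ≤ 1) :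
    ‖f (ordProd s u * ordProd t B)‖ ^ 2 ≤ (f (ordProd s fun i => u i * u i)).re := by
  set P := ordProd s u
  set C := ordProd t B
  have hP : IsSelfAdjoint P := isSelfAdjoint_ordProd hu hcomm
  have hC : (f (star C * C)).re ≤ 1 := by
    have hn : ‖C‖ ≤ 1 :=
      (norm_ordProd_le t B).trans (Finset.prod_le_one (fun _ _ => norm_nonneg _) hB)
    calc (f (star C * C)).re ≤ ‖C‖ ^ 2 * (f 1).re := f.re_apply_star_mul_self_le C
      _ ≤ 1 := by
        rw [hf1, Complex.one_re, mul_one]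
        exact pow_le_one₀ (norm_nonneg _) hn
  calc ‖f (P * C)‖ ^ 2 = ‖f (star P * C)‖ ^ 2 := by rw [hP.star_eq]
    _ ≤ (f (star P * P)).re * (f (star C * C)).re := f.norm_apply_star_mul_sq_le P C
    _ ≤ (f (star P * P)).re :=
        mul_le_of_le_one_right
          (Complex.nonneg_iff.mp (f.map_nonneg (star_mul_self_nonneg P))).1 hC
    _ = (f (ordProd s fun i => u i * u i)).re := by
        rw [hP.star_eq, ordProd_mul_ordProd hcomm hcomm hcomm]

end CStarAlgebra

section Bell

variable {A : Type*} [CStarAlgebra A] [PartialOrder A] [StarOrderedRing A] [Nontrivial A]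
  {m : ℕ} {f : A →ₚ[ℂ] ℂ}

theorem bellValue_le_two_mul_sqrt_two (hf1 : f 1 = 1) {Msub : Fin m → StarSubalgebra ℂ A}
    (hcomm : ∀ i j : Fin m, i ≠ j → ∀ x ∈ Msub i, ∀ y ∈ Msub j, Commute x y)
    {R : Finset (Fin m)} (hR : R.Nonempty)
    (hind : ∀ x : Fin m → A, (∀ i ∈ R, x i ∈ Msub i) → f (ordProd R x) = ∏ i ∈ R, f (x i))
    {A0 A1 : Fin m → A} (hA0 : ∀ i, A0 i ∈ Msub i) (hA1 : ∀ i, A1 i ∈ Msub i)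
    (hsa0 : ∀ i, IsSelfAdjoint (A0 i)) (hsa1 : ∀ i, IsSelfAdjoint (A1 i))
    (hc0 : ∀ i, -1 ≤ A0 i ∧ A0 i ≤ 1) (hc1 : ∀ i, -1 ≤ A1 i ∧ A1 i ≤ 1) :
    bellValue f.toLinearMap R R.card A0 A1 ≤ 2 * √2 := by
  have hn0 i : ‖A0 i‖ ≤ 1 := (hsa0 i).norm_le_one (hc0 i).1 (hc0 i).2
  have hn1 i : ‖A1 i‖ ≤ 1 := (hsa1 i).norm_le_one (hc1 i).1 (hc1 i).2
  have hterm (w B : Fin m → A) (hw : ∀ i, w i ∈ Msub i) (hsa : ∀ i, IsSelfAdjoint (w i))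
      (hB : ∀ i, ‖B i‖ ≤ 1) :
      ‖f (ordProd R w * ordProd Rᶜ B)‖ ^ 2 ≤ ∏ i ∈ R, (f (w i * w i)).re := by
    have h : ‖f (ordProd R w * ordProd Rᶜ B)‖ ^ 2 ≤ (f (ordProd R fun i => w i * w i)).re :=
      f.norm_apply_ordProd_mul_sq_le hf1 (fun i _ => hsa i)
        (fun i _ j _ hij => hcomm i j hij _ (hw i) _ (hw j)) (fun i _ => hB i)
    rwa [hind _ fun i _ => mul_mem (hw i) (hw i), Finset.prod_congr rfl fun i _ =>
      f.apply_mul_self_eq_re (hsa i), ← Complex.ofReal_prod, Complex.ofReal_re] at h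
  have hre_nonneg (a : A) (ha : IsSelfAdjoint a) : 0 ≤ (f (a * a)).re :=
    (Complex.nonneg_iff.mp (f.map_nonneg ha.mul_self_nonneg)).1
  have hsum i : (f ((A0 i + A1 i) * (A0 i + A1 i))).re
      + (f ((A0 i - A1 i) * (A0 i - A1 i))).re ≤ 4 := by
    have h := OrderHomClass.mono f <| add_mul_self_add_sub_mul_self_le_four
      ((hsa0 i).star_eq ▸ star_mul_self_le_one_of_norm_le_one (hn0 i))
      ((hsa1 i).star_eq ▸ star_mul_self_le_one_of_norm_le_one (hn1 i))
    rw [map_add, ← map_ofNat (algebraMap ℂ A), Algebra.algebraMap_eq_smul_one, map_smul,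
      hf1] at h
    simpa using (Complex.le_def.mp h).1
  exact rpow_add_rpow_le_two_mul_sqrt_two hR (fun i _ => hre_nonneg _ ((hsa0 i).add (hsa1 i)))
    (fun i _ => hre_nonneg _ ((hsa0 i).sub (hsa1 i))) (fun i _ => hsum i)
    (norm_nonneg _) (norm_nonneg _)
    (hterm _ A0 (fun i => add_mem (hA0 i) (hA1 i)) (fun i => (hsa0 i).add (hsa1 i)) hn0)
    (hterm _ A1 (fun i => sub_mem (hA0 i) (hA1 i)) (fun i => (hsa0 i).sub (hsa1 i)) hn1)

end Bell

theorem bellSup_between_two_and_two_sqrt_two_general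
    {M : Type*} [NormedRing M] [StarRing M] [CStarRing M] [CompleteSpace M]
    [NormedAlgebra ℂ M] [StarModule ℂ M] [PartialOrder M] [StarOrderedRing M]
    {m : ℕ}
    (Msub : Fin m → StarSubalgebra ℂ M)
    (hcomm : ∀ i j : Fin m, i ≠ j → ∀ x ∈ Msub i, ∀ y ∈ Msub j, Commute x y)
    (R : Finset (Fin m)) (h : ℕ) (hh : 2 ≤ h) (hcard : R.card = h)
    (τ : M →ₗ[ℂ] ℂ)
    (hτpos : ∀ a : M, 0 ≤ τ (star a * a)) (hτ1 : τ 1 = 1)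
    (hind : ∀ x : Fin m → M, (∀ i ∈ R, x i ∈ Msub i) →
      τ (ordProd R x) = ∏ i ∈ R, τ (x i)) :
    2 ≤ bellSup Msub R h τ ∧ bellSup Msub R h τ ≤ 2 * Real.sqrt 2 := by
  let : CStarAlgebra M := {}
  have : Nontrivial M := nontrivial_of_ne 1 0 fun h10 => by simp [h10] at hτ1
  let f : M →ₚ[ℂ] ℂ := .mk₀ τ fun x hx => by
    obtain ⟨a, rfl⟩ := CStarAlgebra.nonneg_iff_eq_star_mul_self.mp hx
    exact hτpos a
  subst hcard
  have hR : R.Nonempty := Finset.card_pos.mp (by omega)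
  have hS {S : Set ℝ} (h2 : 2 ∈ S) (hub : 2 * √2 ∈ upperBounds S) :
      2 ≤ sSup S ∧ sSup S ≤ 2 * √2 :=
    ⟨le_csSup ⟨_, hub⟩ h2, csSup_le ⟨_, h2⟩ hub⟩
  refine hS ⟨fun _ => 1, fun _ => 1, fun _ => one_mem _, fun _ => one_mem _,
    fun _ => .one M, fun _ => .one M, fun _ => ⟨neg_le_self zero_le_one, le_rfl⟩,
    fun _ => ⟨neg_le_self zero_le_one, le_rfl⟩, (bellValue_one_one hτ1 hR).symm⟩ ?_
  rintro _ ⟨A0, A1, hA0, hA1, hsa0, hsa1, hc0, hc1, rfl⟩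
  exact bellValue_le_two_mul_sqrt_two (f := f) hτ1 hcomm hR hind hA0 hA1 hsa0 hsa1 hc0 hc1

theorem bellSup_between_two_and_two_sqrt_two
    {M : Type*} [NormedRing M] [StarRing M] [CStarRing M] [CompleteSpace M]
    [NormedAlgebra ℂ M] [StarModule ℂ M] [PartialOrder M] [StarOrderedRing M]
    {m : ℕ} (hm : 2 ≤ m)
    (Msub : Fin m → StarSubalgebra ℂ M)
    (hcomm : ∀ i j : Fin m, i ≠ j → ∀ x ∈ Msub i, ∀ y ∈ Msub j, Commute x y)
    (R : Finset (Fin m)) (h : ℕ) (hh : 2 ≤ h) (hcard : R.card = h)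
    (τ : M →ₗ[ℂ] ℂ)
    (hτpos : ∀ a : M, 0 ≤ τ (star a * a)) (hτ1 : τ 1 = 1)
    (hind : ∀ x : Fin m → M, (∀ i ∈ R, x i ∈ Msub i) →
      τ (ordProd R x) = ∏ i ∈ R, τ (x i)) :
    2 ≤ bellSup Msub R h τ ∧ bellSup Msub R h τ ≤ 2 * Real.sqrt 2 :=
  bellSup_between_two_and_two_sqrt_two_general Msub hcomm R h hh hcard τ hτpos hτ1 hind
end

section
/- Under the standing hypotheses, if τ is a state on M that is h-independent over R, then 2 · τ( ∏_{i∈R} (A_{i,0}+A_{i,1})² )^{1/(2h)} · τ( ∏_{i∈R} (A_{i,0}−A_{i,1})² )^{1/(2h)} ≤ 4. -/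
open scoped ComplexOrder

/-! The sum `(a + b) ^ 2 + (a - b) ^ 2 = 2 a ^ 2 + 2 b ^ 2` of the two squares is at most `4`
for self-adjoint contractions `a, b`, so a state gives each party two nonnegative numbers with sum
at most `4`, hence product at most `4`. Independence factorises both expectations over `R`, so
their product is at most `4 ^ h`, and its `2h`-th root is at most `2`. -/

section StarOrderedRing

variable {A : Type*}

lemma map_nonneg_of_map_star_mul_self_nonneg [NonUnitalSemiring A] [PartialOrder A] [StarRing A]
    [StarOrderedRing A] {B F : Type*} [AddCommMonoid B] [PartialOrder B] [IsOrderedAddMonoid B]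
    [FunLike F A B] [AddMonoidHomClass F A B] {f : F} (hf : ∀ x, 0 ≤ f (star x * x))
    {a : A} (ha : 0 ≤ a) : 0 ≤ f a := by
  rw [StarOrderedRing.nonneg_iff] at ha
  induction ha using AddSubmonoid.closure_induction with
  | mem x hx => obtain ⟨s, rfl⟩ := hx; exact hf s
  | zero => simp
  | add x y _ _ hx hy => rw [map_add]; exact add_nonneg hx hy

lemma map_mono_of_map_star_mul_self_nonneg [Ring A] [PartialOrder A] [StarRing A]
    [StarOrderedRing A] {B F : Type*} [AddCommGroup B] [PartialOrder B] [IsOrderedAddMonoid B]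
    [FunLike F A B] [AddMonoidHomClass F A B] {f : F} (hf : ∀ x, 0 ≤ f (star x * x))
    {a b : A} (hab : a ≤ b) : f a ≤ f b := by
  simpa using map_nonneg_of_map_star_mul_self_nonneg hf (sub_nonneg.mpr hab)

variable [Ring A] [PartialOrder A] [StarRing A] [StarOrderedRing A]

/-- The factor `2` avoids the non-algebraic fact that `1 - a ^ 2 = (1 - a) (1 + a)` is positive:
`2 (1 - a ^ 2) = (1 - a) (1 + a) (1 - a) + (1 + a) (1 - a) (1 + a)` is a sum of conjugates of
positive elements. -/
lemma IsSelfAdjoint.two_mul_sq_le_two {a : A} (ha : IsSelfAdjoint a) (h₁ : -1 ≤ a) (h₂ : a ≤ 1) :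
    2 * a ^ 2 ≤ 2 := by
  have hplus : 0 ≤ 1 + a := neg_le_iff_add_nonneg'.mp h₁
  have hminus : 0 ≤ 1 - a := sub_nonneg.mpr h₂
  have hsum := add_nonneg ((IsSelfAdjoint.one A).sub ha |>.conjugate_nonneg hplus)
    ((IsSelfAdjoint.one A).add ha |>.conjugate_nonneg hminus)
  rw [← sub_nonneg]
  convert hsum using 1
  rw [← one_add_one_eq_two]
  noncomm_ring

lemma IsSelfAdjoint.add_sq_add_sub_sq_le_four {a b : A} (ha : IsSelfAdjoint a)
    (hb : IsSelfAdjoint b) (ha₁ : -1 ≤ a) (ha₂ : a ≤ 1) (hb₁ : -1 ≤ b) (hb₂ : b ≤ 1) :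
    (a + b) ^ 2 + (a - b) ^ 2 ≤ 4 := by
  calc (a + b) ^ 2 + (a - b) ^ 2 = 2 * a ^ 2 + 2 * b ^ 2 := by noncomm_ring
    _ ≤ 2 + 2 := add_le_add (ha.two_mul_sq_le_two ha₁ ha₂) (hb.two_mul_sq_le_two hb₁ hb₂)
    _ = 4 := by norm_num

lemma IsSelfAdjoint.re_map_add_sq_mul_re_map_sub_sq_le_four [Module ℂ A] {τ : A →ₗ[ℂ] ℂ}
    (hτpos : ∀ x, 0 ≤ τ (star x * x)) (hτ1 : τ 1 = 1) {a b : A} (ha : IsSelfAdjoint a)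
    (hb : IsSelfAdjoint b) (ha₁ : -1 ≤ a) (ha₂ : a ≤ 1) (hb₁ : -1 ≤ b) (hb₂ : b ≤ 1) :
    (τ ((a + b) ^ 2)).re * (τ ((a - b) ^ 2)).re ≤ 4 := by
  have hsum : τ ((a + b) ^ 2) + τ ((a - b) ^ 2) ≤ 4 := by
    have hτ4 : τ 4 = 4 := by rw [← Nat.cast_ofNat, ← nsmul_one, map_nsmul, hτ1]; simp
    rw [← map_add, ← hτ4]
    exact map_mono_of_map_star_mul_self_nonneg hτpos
      (ha.add_sq_add_sub_sq_le_four hb ha₁ ha₂ hb₁ hb₂)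
  have hP := Complex.nonneg_iff.mp <|
    map_nonneg_of_map_star_mul_self_nonneg hτpos (ha.add hb).sq_nonneg
  have hQ := Complex.nonneg_iff.mp <|
    map_nonneg_of_map_star_mul_self_nonneg hτpos (ha.sub hb).sq_nonneg
  have hsum_re := (Complex.le_def.mp hsum).1
  simp only [Complex.add_re, Complex.re_ofNat] at hsum_re
  nlinarith [four_mul_le_sq_add (τ ((a + b) ^ 2)).re (τ ((a - b) ^ 2)).re]

end StarOrderedRing

lemma Complex.re_prod_of_nonneg {ι : Type*} {s : Finset ι} {f : ι → ℂ}
    (hf : ∀ i ∈ s, 0 ≤ f i) : (∏ i ∈ s, f i).re = ∏ i ∈ s, (f i).re := by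
  have hreal : ∀ i ∈ s, f i = ((f i).re : ℂ) := fun i hi =>
    Complex.eq_re_of_ofReal_le (by rw [Complex.ofReal_zero]; exact hf i hi)
  rw [Finset.prod_congr rfl hreal, ← Complex.ofReal_prod, Complex.ofReal_re]

lemma Real.rpow_one_div_two_mul_le_two {a : ℝ} {n : ℕ} (ha : 0 ≤ a) (han : a ≤ 4 ^ n) :
    a ^ (1 / (2 * (n : ℝ))) ≤ 2 := by
  rcases Nat.eq_zero_or_pos n with rfl | hn
  · norm_num
  calc a ^ (1 / (2 * (n : ℝ))) ≤ ((2 : ℝ) ^ (2 * n)) ^ ((2 * n : ℕ) : ℝ)⁻¹ := by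
        rw [pow_mul, Nat.cast_mul, Nat.cast_two, one_div]
        exact Real.rpow_le_rpow ha (by norm_num [han]) (by positivity)
    _ = 2 := Real.pow_rpow_inv_natCast (by norm_num) (by omega)

theorem twice_product_of_rpow_products_le_four_general
    {M : Type*} [NormedRing M] [StarRing M]
    [NormedAlgebra ℂ M] [StarModule ℂ M] [PartialOrder M] [StarOrderedRing M]
    {m : ℕ}
    (Msub : Fin m → StarSubalgebra ℂ M)
    (A0 A1 : Fin m → M)
    (hA0mem : ∀ i, A0 i ∈ Msub i) (hA1mem : ∀ i, A1 i ∈ Msub i)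
    (hA0sa : ∀ i, IsSelfAdjoint (A0 i)) (hA1sa : ∀ i, IsSelfAdjoint (A1 i))
    (hA0c : ∀ i, -1 ≤ A0 i ∧ A0 i ≤ 1) (hA1c : ∀ i, -1 ≤ A1 i ∧ A1 i ≤ 1)
    (R : Finset (Fin m)) (h : ℕ) (hcard : R.card = h)
    (τ : M →ₗ[ℂ] ℂ)
    (hτpos : ∀ a : M, 0 ≤ τ (star a * a)) (hτ1 : τ 1 = 1)
    (hind : ∀ x : Fin m → M, (∀ i ∈ R, x i ∈ Msub i) →
      τ (ordProd R x) = ∏ i ∈ R, τ (x i)) :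
    2 * (τ (ordProd R (fun i => (A0 i + A1 i) ^ 2))).re ^ (1 / (2 * (h : ℝ))) *
      (τ (ordProd R (fun i => (A0 i - A1 i) ^ 2))).re ^ (1 / (2 * (h : ℝ))) ≤ 4 := by
  have hP : ∀ i ∈ R, 0 ≤ τ ((A0 i + A1 i) ^ 2) := fun i _ =>
    map_nonneg_of_map_star_mul_self_nonneg hτpos ((hA0sa i).add (hA1sa i)).sq_nonneg
  have hQ : ∀ i ∈ R, 0 ≤ τ ((A0 i - A1 i) ^ 2) := fun i _ =>
    map_nonneg_of_map_star_mul_self_nonneg hτpos ((hA0sa i).sub (hA1sa i)).sq_nonneg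
  have hPre := fun i hi => (Complex.nonneg_iff.mp (hP i hi)).1
  have hQre := fun i hi => (Complex.nonneg_iff.mp (hQ i hi)).1
  rw [hind _ fun i _ => pow_mem (add_mem (hA0mem i) (hA1mem i)) 2,
    hind _ fun i _ => pow_mem (sub_mem (hA0mem i) (hA1mem i)) 2,
    Complex.re_prod_of_nonneg hP, Complex.re_prod_of_nonneg hQ, mul_assoc,
    ← Real.mul_rpow (Finset.prod_nonneg hPre) (Finset.prod_nonneg hQre),
    ← Finset.prod_mul_distrib]
  have hprod : ∏ i ∈ R, (τ ((A0 i + A1 i) ^ 2)).re * (τ ((A0 i - A1 i) ^ 2)).re ≤ 4 ^ h := by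
    rw [← hcard, ← Finset.prod_const]
    exact Finset.prod_le_prod (fun i hi => mul_nonneg (hPre i hi) (hQre i hi))
      fun i _ => (hA0sa i).re_map_add_sq_mul_re_map_sub_sq_le_four hτpos hτ1 (hA1sa i)
        (hA0c i).1 (hA0c i).2 (hA1c i).1 (hA1c i).2
  have hroot := Real.rpow_one_div_two_mul_le_two
    (Finset.prod_nonneg fun i hi => mul_nonneg (hPre i hi) (hQre i hi)) hprod
  linarith

theorem twice_product_of_rpow_products_le_four
    {M : Type*} [NormedRing M] [StarRing M] [CStarRing M] [CompleteSpace M]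
    [NormedAlgebra ℂ M] [StarModule ℂ M] [PartialOrder M] [StarOrderedRing M]
    {m : ℕ} (hm : 2 ≤ m)
    (Msub : Fin m → StarSubalgebra ℂ M)
    (hcomm : ∀ i j : Fin m, i ≠ j → ∀ x ∈ Msub i, ∀ y ∈ Msub j, Commute x y)
    (A0 A1 : Fin m → M)
    (hA0mem : ∀ i, A0 i ∈ Msub i) (hA1mem : ∀ i, A1 i ∈ Msub i)
    (hA0sa : ∀ i, IsSelfAdjoint (A0 i)) (hA1sa : ∀ i, IsSelfAdjoint (A1 i))
    (hA0c : ∀ i, -1 ≤ A0 i ∧ A0 i ≤ 1) (hA1c : ∀ i, -1 ≤ A1 i ∧ A1 i ≤ 1)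
    (R : Finset (Fin m)) (h : ℕ) (hh : 2 ≤ h) (hcard : R.card = h)
    (τ : M →ₗ[ℂ] ℂ)
    (hτpos : ∀ a : M, 0 ≤ τ (star a * a)) (hτ1 : τ 1 = 1)
    (hind : ∀ x : Fin m → M, (∀ i ∈ R, x i ∈ Msub i) →
      τ (ordProd R x) = ∏ i ∈ R, τ (x i)) :
    2 * (τ (ordProd R (fun i => (A0 i + A1 i) ^ 2))).re ^ (1 / (2 * (h : ℝ))) *
      (τ (ordProd R (fun i => (A0 i - A1 i) ^ 2))).re ^ (1 / (2 * (h : ℝ))) ≤ 4 :=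
  twice_product_of_rpow_products_le_four_general Msub A0 A1 hA0mem hA1mem hA0sa hA1sa hA0c hA1c R h
    hcard τ hτpos hτ1 hind
end
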